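/- arXiv:2309.16094 — 2 statements merged into one kernel-verified Lean document; each statement's English description precedes it below -/
import Mathlib

section
/- Let y, z ∈ ℂ with |y| < 1, |z| < 1, y ≠ 1 and y ≠ −1. Then the infinite product over all pairs of positive integers (j,k) with j ≤ k and gcd(j,k) = 1 of (1 + y^j z^k)^(1/k) equals ((1 − yz)/(1 − z))^(y/(1 − y)) · ((1 − z²)/(1 − y²z²))^(y²/(1 − y²)). -/
/-!
Taking logarithms, the product becomes `∑ log (1 + y^j z^k) / k` over coprime `j ≤ k`, and since
`1 + w = (1 - w²) / (1 - w)` this is `L(y, z) - L(y², z²)` with `L(y, z) = ∑ -log (1 - y^j z^k) / k`.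
Expanding `-log (1 - w) = ∑ wⁿ / n` and putting `(a, b) = (n j, n k)`, where `n = gcd a b`
recovers the coprime pair, turns `L(y, z)` into `∑_{1 ≤ a ≤ b} y^a z^b / b`. Summing over `a`
first leaves a geometric sum, so `L(y, z) = y / (1 - y) * (log (1 - y z) - log (1 - z))`.
-/

open Complex

lemma one_sub_re_pos {w : ℂ} (hw : ‖w‖ < 1) : 0 < (1 - w).re := by
  have := (re_le_norm w).trans_lt hw
  simp only [sub_re, one_re]
  linarith

lemma one_sub_ne_zero_of_norm_lt_one {w : ℂ} (hw : ‖w‖ < 1) : 1 - w ≠ 0 :=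
  sub_ne_zero.mpr fun h => by simp [← h] at hw

lemma log_div_of_re_pos {a b : ℂ} (ha : 0 < a.re) (hb : 0 < b.re) :
    log (a / b) = log a - log b := by
  have hargA := abs_lt.mp (abs_arg_lt_pi_div_two_iff.mpr (Or.inl ha))
  have hargB := abs_lt.mp (abs_arg_lt_pi_div_two_iff.mpr (Or.inl hb))
  have ha0 : a ≠ 0 := fun h => by simp [h] at ha
  have hb0 : b ≠ 0 := fun h => by simp [h] at hb
  rw [← exp_log ha0, ← exp_log hb0, ← exp_sub, log_exp, log_exp, log_exp] <;>
    simp only [sub_im, log_im] <;> linarith [Real.pi_pos]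

lemma log_one_sub_div_one_sub {a b : ℂ} (ha : ‖a‖ < 1) (hb : ‖b‖ < 1) :
    log ((1 - a) / (1 - b)) = log (1 - a) - log (1 - b) :=
  log_div_of_re_pos (one_sub_re_pos ha) (one_sub_re_pos hb)

lemma one_sub_div_one_sub_cpow {a b : ℂ} (ha : ‖a‖ < 1) (hb : ‖b‖ < 1) (c : ℂ) :
    ((1 - a) / (1 - b)) ^ c = exp ((log (1 - a) - log (1 - b)) * c) := by
  rw [cpow_def_of_ne_zero (div_ne_zero (one_sub_ne_zero_of_norm_lt_one ha)
    (one_sub_ne_zero_of_norm_lt_one hb)), log_one_sub_div_one_sub ha hb]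

lemma hasProd_cpow_of_hasSum {ι : Type*} {w c : ι → ℂ} {s : ℂ} (hw : ∀ i, w i ≠ 0)
    (h : HasSum (fun i => log (w i) * c i) s) : HasProd (fun i => w i ^ c i) (exp s) :=
  h.cexp.congr_fun fun i => cpow_def_of_ne_zero (hw i) (c i)

lemma norm_pow_mul_pow_lt_one {y z : ℂ} (hy : ‖y‖ < 1) (hz : ‖z‖ < 1) {j k : ℕ} (hk : 0 < k) :
    ‖y ^ j * z ^ k‖ < 1 := by
  rw [norm_mul, norm_pow, norm_pow]
  exact mul_lt_one_of_nonneg_of_lt_one_right (pow_le_one₀ (norm_nonneg y) hy.le)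
    (by positivity) (pow_lt_one₀ (norm_nonneg z) hz hk.ne')

lemma hasSum_pow_mul_pow_div {y z : ℂ} (hy : ‖y‖ < 1) (hz : ‖z‖ < 1) (hy1 : y ≠ 1) :
    HasSum (fun p : ℕ × ℕ => if 0 < p.1 ∧ p.1 ≤ p.2 then y ^ p.1 * z ^ p.2 / p.2 else 0)
      (y / (1 - y) * (log (1 - y * z) - log (1 - z))) := by
  set f : ℕ × ℕ → ℂ := fun p => if 0 < p.1 ∧ p.1 ≤ p.2 then y ^ p.1 * z ^ p.2 / p.2 else 0
  have hsummable : Summable f := by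
    refine .of_norm_bounded ((summable_geometric_of_lt_one (norm_nonneg y) hy).mul_of_nonneg
      (summable_geometric_of_lt_one (norm_nonneg z) hz) (fun _ => by positivity)
      (fun _ => by positivity)) fun ⟨a, b⟩ => ?_
    simp only [f]
    split_ifs with h
    · rw [norm_div, norm_mul, norm_pow, norm_pow, Complex.norm_natCast]
      exact div_le_self (by positivity) (by exact_mod_cast h.1.trans_le h.2)
    · simp only [norm_zero]; positivity
  have hfiber (b : ℕ) :
      HasSum (fun a => f (a, b)) (y / (1 - y) * (z ^ b / b - (y * z) ^ b / b)) := by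
    have hsupp : ∀ a ∉ Finset.Ico 1 (b + 1), f (a, b) = 0 := fun a ha => by
      simp only [Finset.mem_Ico, not_and_or, not_le, not_lt] at ha
      exact if_neg (by omega)
    convert hasSum_sum_of_ne_finset_zero (L := .unconditional ℕ) hsupp using 1
    rw [Finset.sum_congr rfl fun a ha => if_pos (by simp only [Finset.mem_Ico] at ha; omega)]
    dsimp only
    rw [← Finset.sum_div, ← Finset.sum_mul, geom_sum_Ico' hy1 (by omega), mul_pow, pow_succ]
    ring
  have hlog : HasSum (fun b : ℕ => y / (1 - y) * (z ^ b / b - (y * z) ^ b / b))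
      (y / (1 - y) * (log (1 - y * z) - log (1 - z))) := by
    have hyz : ‖y * z‖ < 1 := by
      simpa using norm_pow_mul_pow_lt_one hy hz (j := 1) one_pos
    rw [show log (1 - y * z) - log (1 - z) = -log (1 - z) - -log (1 - y * z) by ring]
    exact ((hasSum_taylorSeries_neg_log hz).sub (hasSum_taylorSeries_neg_log hyz)).mul_left _
  have hrows := ((Equiv.prodComm ℕ ℕ).hasSum_iff.mpr hsummable.hasSum).prod_fiberwise hfiber
  exact hrows.unique hlog ▸ hsummable.hasSum

abbrev ReducedPair := {p : ℕ × ℕ // 0 < p.1 ∧ 0 < p.2 ∧ p.1 ≤ p.2 ∧ Nat.gcd p.1 p.2 = 1}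

namespace ReducedPair

def multiple (q : ReducedPair × ℕ) : ℕ × ℕ :=
  ((q.2 + 1) * q.1.1.1, (q.2 + 1) * q.1.1.2)

lemma gcd_multiple (q : ReducedPair × ℕ) : Nat.gcd (multiple q).1 (multiple q).2 = q.2 + 1 := by
  rw [multiple, Nat.gcd_mul_left, q.1.2.2.2.2, mul_one]

lemma multiple_injective : Function.Injective multiple := by
  intro q q' h
  have hn : q.2 = q'.2 := by
    simpa only [gcd_multiple, Nat.add_right_cancel_iff] using
      congrArg (fun p : ℕ × ℕ => Nat.gcd p.1 p.2) h
  simp only [multiple, hn, Prod.mk.injEq, Nat.mul_left_cancel_iff q'.2.succ_pos] at h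
  exact Prod.ext (Subtype.ext (Prod.ext h.1 h.2)) hn

lemma exists_multiple_eq {a b : ℕ} (ha : 0 < a) (hab : a ≤ b) : ∃ q, multiple q = (a, b) := by
  have hg : 0 < Nat.gcd a b := Nat.gcd_pos_of_pos_left b ha
  refine ⟨⟨⟨(a / Nat.gcd a b, b / Nat.gcd a b), Nat.div_gcd_pos_of_pos_left b ha,
    Nat.div_gcd_pos_of_pos_right a (ha.trans_le hab), Nat.div_le_div_right hab,
    Nat.coprime_div_gcd_div_gcd hg⟩, Nat.gcd a b - 1⟩, ?_⟩
  simp only [multiple, Nat.sub_add_cancel hg, Nat.mul_div_cancel' (Nat.gcd_dvd_left a b),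
    Nat.mul_div_cancel' (Nat.gcd_dvd_right a b)]

end ReducedPair

lemma hasSum_neg_log_one_sub_div {y z : ℂ} (hy : ‖y‖ < 1) (hz : ‖z‖ < 1) (hy1 : y ≠ 1) :
    HasSum (fun p : ReducedPair => -log (1 - y ^ p.1.1 * z ^ p.1.2) / p.1.2)
      (y / (1 - y) * (log (1 - y * z) - log (1 - z))) := by
  set f : ℕ × ℕ → ℂ := fun p => if 0 < p.1 ∧ p.1 ≤ p.2 then y ^ p.1 * z ^ p.2 / p.2 else 0
  have hvanish : ∀ p ∉ Set.range ReducedPair.multiple, f p = 0 := by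
    rintro ⟨a, b⟩ hp
    exact if_neg fun ⟨ha, hab⟩ => hp (ReducedPair.exists_multiple_eq ha hab)
  refine ((ReducedPair.multiple_injective.hasSum_iff hvanish).mpr
    (hasSum_pow_mul_pow_div hy hz hy1)).prod_fiberwise fun p => ?_
  refine ((hasSum_taylorSeries_neg_log' (norm_pow_mul_pow_lt_one hy hz p.2.2.1)).div_const
    (p.1.2 : ℂ)).congr_fun fun n => ?_
  simp only [Function.comp, f, ReducedPair.multiple]
  rw [if_pos ⟨Nat.mul_pos n.succ_pos p.2.1, Nat.mul_le_mul_left _ p.2.2.2.1⟩, mul_pow,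
    ← pow_mul, ← pow_mul, Nat.cast_mul, div_div]
  push_cast
  ring

lemma hasSum_log_one_add_div {y z : ℂ} (hy : ‖y‖ < 1) (hz : ‖z‖ < 1) (hy2 : y ^ 2 ≠ 1) :
    HasSum (fun p : ReducedPair => log (1 + y ^ p.1.1 * z ^ p.1.2) / p.1.2)
      (y / (1 - y) * (log (1 - y * z) - log (1 - z))
        - y ^ 2 / (1 - y ^ 2) * (log (1 - y ^ 2 * z ^ 2) - log (1 - z ^ 2))) := by
  have hsq {w : ℂ} (hw : ‖w‖ < 1) : ‖w ^ 2‖ < 1 :=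
    (norm_pow w 2).trans_lt (pow_lt_one₀ (norm_nonneg w) hw two_ne_zero)
  have hy1 : y ≠ 1 := by rintro rfl; exact hy2 (one_pow 2)
  refine ((hasSum_neg_log_one_sub_div hy hz hy1).sub
    (hasSum_neg_log_one_sub_div (hsq hy) (hsq hz) hy2)).congr_fun fun p => ?_
  set w := y ^ p.1.1 * z ^ p.1.2
  have hw : ‖w‖ < 1 := norm_pow_mul_pow_lt_one hy hz p.2.2.1
  have hw2 : (y ^ 2) ^ p.1.1 * (z ^ 2) ^ p.1.2 = w ^ 2 := by ring
  have hquot : 1 + w = (1 - w ^ 2) / (1 - w) := by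
    rw [eq_div_iff (one_sub_ne_zero_of_norm_lt_one hw)]; ring
  rw [hw2, hquot, log_one_sub_div_one_sub (hsq hw) hw]
  ring

theorem stmt_3 (y z : ℂ) (hy : ‖y‖ < 1) (hz : ‖z‖ < 1) (hy1 : y ≠ 1) (hy2 : y ≠ -1) :
    (∏' p : {p : ℕ × ℕ // 0 < p.1 ∧ 0 < p.2 ∧ p.1 ≤ p.2 ∧ Nat.gcd p.1 p.2 = 1},
      (1 + y ^ p.1.1 * z ^ p.1.2) ^ (1 / (p.1.2 : ℂ))) =
    ((1 - y * z) / (1 - z)) ^ (y / (1 - y)) *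
      ((1 - z ^ 2) / (1 - y ^ 2 * z ^ 2)) ^ (y ^ 2 / (1 - y ^ 2)) := by
  have hsq : y ^ 2 ≠ 1 := fun h => (mul_self_eq_one_iff.mp ((sq y).symm.trans h)).elim hy1 hy2
  have hprod := hasProd_cpow_of_hasSum
    (fun p : ReducedPair => slitPlane_ne_zero (mem_slitPlane_of_norm_lt_one
      (norm_pow_mul_pow_lt_one hy hz p.2.2.1)))
    ((hasSum_log_one_add_div hy hz hsq).congr_fun fun p => (div_eq_mul_one_div _ _).symm)
  rw [hprod.tprod_eq,
    one_sub_div_one_sub_cpow (by simpa using norm_pow_mul_pow_lt_one hy hz (j := 1) one_pos) hz,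
    one_sub_div_one_sub_cpow (by simpa using norm_pow_mul_pow_lt_one hy hz (j := 0) two_pos)
      (norm_pow_mul_pow_lt_one hy hz two_pos), ← exp_add]
  congr 1
  ring
end

section
/- Let N ≥ 2 be an integer, let x_1, …, x_N ∈ ℂ with |x_i| < 1 for all i, and let b_1, …, b_N ∈ ℂ with b_1 + ⋯ + b_N = 1. Then the infinite product over all N-tuples of positive integers (a_1, …, a_N) with a_i ≤ a_N for every i < N and gcd(a_1, …, a_N) = 1 of (1/(1 − x_1^{a_1} x_2^{a_2} ⋯ x_N^{a_N}))^( 1/(a_1^{b_1} a_2^{b_2} ⋯ a_N^{b_N}) ) equals exp( Σ_{k=1}^∞ ( ∏_{i=1}^{N−1} Σ_{j=1}^{k} x_i^j / j^{b_i} ) · x_N^k / k^{b_N} ). -/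
open Finset Complex

/-!
Taking logarithms, `-log (1 - z) = ∑ zᵐ / m` turns the product over a visible point `v` into
`∑ₘ x^(m v) / (m · v^b)`, and since `∑ bᵢ = 1` we have `(m v)^b = m · v^b`. Every lattice point `a`
of the pyramid is uniquely `m v` with `v` visible (`m = gcd a`), so the logarithm of the product is
the sum of `x^a / a^b` over all lattice points of the pyramid; this double series converges
absolutely because it is dominated by a product of `N` convergent one-variable series. Summing
over the slices `a_N = k`, on which the other coordinates range independently over `[1, k]`,
gives the right-hand side.
-/

theorem summable_norm_pow_div_natCast_cpow {z : ℂ} (hz : ‖z‖ < 1) (s : ℂ) :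
    Summable fun n : ℕ => ‖z ^ n / (n : ℂ) ^ s‖ := by
  obtain ⟨K, hK⟩ := exists_nat_ge (-s.re)
  refine Summable.of_norm_bounded_eventually_nat
    (summable_pow_mul_geometric_of_norm_lt_one K (r := ‖z‖) (by simpa using hz)) ?_
  filter_upwards [Filter.eventually_ge_atTop 1] with n hn
  rw [norm_norm, norm_div, norm_pow, norm_natCast_cpow_of_pos hn, div_eq_mul_inv,
    ← Real.rpow_neg (Nat.cast_nonneg n), mul_comm]
  gcongr
  rw [← Real.rpow_natCast]
  exact Real.rpow_le_rpow_of_exponent_le (by exact_mod_cast hn) hK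

theorem summable_fintype_prod_of_nonneg {ι κ : Type*} [Fintype ι] {f : ι → κ → ℝ}
    (hf₀ : ∀ i k, 0 ≤ f i k) (hf : ∀ i, Summable (f i)) :
    Summable fun a : ι → κ => ∏ i, f i (a i) := by
  classical
  refine summable_of_sum_le (c := ∏ i, ∑' k, f i k)
    (fun a => prod_nonneg fun i _ => hf₀ i (a i)) fun u => ?_
  calc ∑ a ∈ u, ∏ i, f i (a i)
      ≤ ∑ a ∈ Fintype.piFinset fun i => u.image (· i), ∏ i, f i (a i) :=
        sum_le_sum_of_subset_of_nonneg
          (fun a ha => Fintype.mem_piFinset.2 fun i => mem_image_of_mem _ ha)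
          (fun a _ _ => prod_nonneg fun i _ => hf₀ i (a i))
    _ = ∏ i, ∑ k ∈ u.image (· i), f i k := (prod_univ_sum _ _).symm
    _ ≤ ∏ i, ∑' k, f i k :=
        prod_le_prod (fun i _ => sum_nonneg fun k _ => hf₀ i k)
          fun i _ => (hf i).sum_le_tsum _ fun k _ => hf₀ i k

theorem one_div_one_sub_cpow_eq_exp {z : ℂ} (hz : ‖z‖ < 1) (w : ℂ) :
    (1 / (1 - z)) ^ w = exp (w * -log (1 - z)) := by
  have hre : 0 < (1 - z).re := by
    rw [sub_re, one_re]
    linarith [re_le_norm z]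
  have hne : 1 - z ≠ 0 := fun h => by rw [h, zero_re] at hre; exact hre.false
  have harg : (1 - z).arg ≠ Real.pi := fun h => by linarith [(arg_eq_pi_iff.1 h).1]
  rw [one_div, cpow_def_of_ne_zero (inv_ne_zero hne), log_inv _ harg, mul_comm]

section Lattice

variable {ι : Type*} [Fintype ι]

noncomputable def latticeTerm (x b : ι → ℂ) (a : ι → ℕ) : ℂ :=
  ∏ i, x i ^ a i / (a i : ℂ) ^ b i

theorem summable_latticeTerm {x : ι → ℂ} (hx : ∀ i, ‖x i‖ < 1) (b : ι → ℂ) :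
    Summable (latticeTerm x b) := by
  refine Summable.of_norm ?_
  simp only [latticeTerm, norm_prod]
  exact summable_fintype_prod_of_nonneg (f := fun i (n : ℕ) => ‖x i ^ n / (n : ℂ) ^ b i‖)
    (fun _ _ => norm_nonneg _)
    fun i => summable_norm_pow_div_natCast_cpow (hx i) (b i)

theorem norm_prod_pow_lt_one [Nonempty ι] {x : ι → ℂ} (hx : ∀ i, ‖x i‖ < 1) {a : ι → ℕ}
    (ha : ∀ i, 0 < a i) : ‖∏ i, x i ^ a i‖ < 1 := by
  classical
  obtain ⟨i₀⟩ := ‹Nonempty ι›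
  rw [← mul_prod_erase univ _ (mem_univ i₀), norm_mul]
  refine mul_lt_one_of_nonneg_of_lt_one_left (norm_nonneg _) ?_ ?_
  · rw [norm_pow]
    exact pow_lt_one₀ (norm_nonneg _) (hx i₀) (ha i₀).ne'
  · rw [norm_prod]
    exact prod_le_one (fun _ _ => norm_nonneg _) fun i _ => by
      rw [norm_pow]; exact pow_le_one₀ (norm_nonneg _) (hx i).le

theorem cpow_sum_of_ne_zero {z : ℂ} (hz : z ≠ 0) {κ : Type*} (s : Finset κ) (f : κ → ℂ) :
    z ^ (∑ i ∈ s, f i) = ∏ i ∈ s, z ^ f i := by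
  rw [cpow_def_of_ne_zero hz, mul_sum, exp_sum]
  exact prod_congr rfl fun i _ => (cpow_def_of_ne_zero hz _).symm

theorem latticeTerm_nsmul {x b : ι → ℂ} (hb : ∑ i, b i = 1) (a : ι → ℕ) {m : ℕ} (hm : 0 < m) :
    latticeTerm x b (m • a) = (1 / ∏ i, (a i : ℂ) ^ b i) * ((∏ i, x i ^ a i) ^ m / m) := by
  have hden : ∏ i, ((m * a i : ℕ) : ℂ) ^ b i = m * ∏ i, (a i : ℂ) ^ b i := by
    simp only [Nat.cast_mul, natCast_mul_natCast_cpow, prod_mul_distrib]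
    rw [← cpow_sum_of_ne_zero (by exact_mod_cast hm.ne'), hb, cpow_one]
  rw [latticeTerm, prod_div_distrib]
  simp only [Pi.smul_apply, smul_eq_mul, pow_mul', prod_pow]
  rw [hden]
  ring

theorem hasSum_latticeTerm_nsmul [Nonempty ι] {x b : ι → ℂ} (hx : ∀ i, ‖x i‖ < 1)
    (hb : ∑ i, b i = 1) {a : ι → ℕ} (ha : ∀ i, 0 < a i) :
    HasSum (fun m : ℕ+ => latticeTerm x b ((m : ℕ) • a))
      ((1 / ∏ i, (a i : ℂ) ^ b i) * -log (1 - ∏ i, x i ^ a i)) := by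
  have hlog := hasSum_taylorSeries_neg_log (norm_prod_pow_lt_one hx ha)
  -- the `n = 0` term of the logarithmic series is `z ^ 0 / 0 = 0`
  rw [← add_zero (-log _), show (0 : ℂ) = (∏ i, x i ^ a i) ^ 0 / (0 : ℕ) by simp] at hlog
  refine ((hasSum_pnat_iff.2 hlog).mul_left _).congr_fun fun m => ?_
  exact latticeTerm_nsmul hb a m.pos

end Lattice

section Visible

variable {ι : Type*} [Fintype ι]

abbrev PosTuples (P : (ι → ℕ) → Prop) := {a : ι → ℕ // (∀ i, 0 < a i) ∧ P a}

abbrev VisibleTuples (P : (ι → ℕ) → Prop) :=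
  {a : ι → ℕ // (∀ i, 0 < a i) ∧ P a ∧ univ.gcd a = 1}

def IsScaleInvariant (P : (ι → ℕ) → Prop) : Prop := ∀ m a, 0 < m → (P (m • a) ↔ P a)

theorem gcd_pos_of_forall_pos [Nonempty ι] {a : ι → ℕ} (ha : ∀ i, 0 < a i) : 0 < univ.gcd a :=
  Nat.pos_of_ne_zero fun h =>
    (ha (Classical.arbitrary ι)).ne' (gcd_eq_zero_iff.1 h _ (mem_univ _))

theorem gcd_nsmul (m : ℕ) (a : ι → ℕ) : univ.gcd (m • a) = m * univ.gcd a :=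
  (Finset.gcd_mul_left (s := univ) (f := a) (a := m)).trans (by rw [normalize_eq])

theorem gcd_nsmul_div_gcd (a : ι → ℕ) : univ.gcd a • (fun i => a i / univ.gcd a) = a :=
  funext fun i => Nat.mul_div_cancel' (gcd_dvd (mem_univ i))

variable [Nonempty ι] {P : (ι → ℕ) → Prop}

def visibleProdPNatEquiv (hP : IsScaleInvariant P) : VisibleTuples P × ℕ+ ≃ PosTuples P where
  toFun p := ⟨(p.2 : ℕ) • p.1.1, fun i => Nat.mul_pos p.2.pos (p.1.2.1 i),
    (hP _ _ p.2.pos).2 p.1.2.2.1⟩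
  invFun a :=
    have hg := gcd_pos_of_forall_pos a.2.1
    (⟨fun i => a.1 i / univ.gcd a.1,
      fun i => Nat.div_pos (Nat.le_of_dvd (a.2.1 i) (gcd_dvd (mem_univ i))) hg,
      (hP _ _ hg).1 (by rw [gcd_nsmul_div_gcd]; exact a.2.2),
      gcd_div_eq_one (mem_univ (Classical.arbitrary ι)) (a.2.1 _).ne'⟩, ⟨_, hg⟩)
  left_inv := by
    rintro ⟨⟨v, hv, -, hv₁⟩, m⟩
    have hg : univ.gcd ((m : ℕ) • v) = m := by rw [gcd_nsmul, hv₁, mul_one]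
    ext i
    · simp only [hg, Pi.smul_apply, smul_eq_mul]
      exact Nat.mul_div_cancel_left _ m.pos
    · exact PNat.eq hg
  right_inv a := Subtype.ext (gcd_nsmul_div_gcd a.1)

theorem HasSum.visible_fiberwise {E : Type*} [AddCommMonoid E] [TopologicalSpace E]
    [ContinuousAdd E] [RegularSpace E] (hP : IsScaleInvariant P) {f : (ι → ℕ) → E}
    {g : VisibleTuples P → E} {s : E} (hf : HasSum (fun a : PosTuples P => f a) s)
    (hg : ∀ v : VisibleTuples P, HasSum (fun m : ℕ+ => f ((m : ℕ) • v.1)) (g v)) :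
    HasSum g s :=
  ((visibleProdPNatEquiv hP).hasSum_iff.2 hf).prod_fiberwise hg

theorem tprod_visible_eq_exp_tsum (hP : IsScaleInvariant P) {x b : ι → ℂ}
    (hx : ∀ i, ‖x i‖ < 1) (hb : ∑ i, b i = 1) :
    ∏' v : VisibleTuples P, (1 / (1 - ∏ i, x i ^ v.1 i)) ^ (1 / ∏ i, ((v.1 i : ℂ) ^ b i)) =
      exp (∑' a : PosTuples P, latticeTerm x b a) := by
  have hsum : HasSum (fun a : PosTuples P => latticeTerm x b a)
      (∑' a : PosTuples P, latticeTerm x b a) :=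
    ((summable_latticeTerm hx b).comp_injective Subtype.val_injective).hasSum
  rw [← (hsum.visible_fiberwise hP fun v => hasSum_latticeTerm_nsmul hx hb v.2.1).cexp.tprod_eq]
  exact tprod_congr fun v => one_div_one_sub_cpow_eq_exp (norm_prod_pow_lt_one hx v.2.1) _

end Visible

section Pyramid

variable {M : ℕ}

def IsInPyramid (M : ℕ) (a : Fin (M + 1) → ℕ) : Prop :=
  ∀ i : Fin (M + 1), (i : ℕ) < M → a i ≤ a (Fin.last M)

theorem isScaleInvariant_isInPyramid : IsScaleInvariant (IsInPyramid M) := by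
  intro m a hm
  simp only [IsInPyramid, Pi.smul_apply, smul_eq_mul, Nat.mul_le_mul_left_iff hm]

theorem forall_pos_and_isInPyramid_iff {a : Fin (M + 1) → ℕ} :
    ((∀ i, 0 < a i) ∧ IsInPyramid M a) ↔
      0 < a (Fin.last M) ∧ Fin.init a ∈ Fintype.piFinset fun _ => Icc 1 (a (Fin.last M)) := by
  rw [IsInPyramid, Fin.forall_fin_succ', Fin.forall_fin_succ']
  simp only [Fintype.mem_piFinset, mem_Icc, Fin.init, Fin.val_castSucc, Fin.val_last, Fin.is_lt,
    lt_irrefl, Nat.one_le_iff_ne_zero, Nat.pos_iff_ne_zero]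
  grind

def lastPNat (a : PosTuples (IsInPyramid M)) : ℕ+ := ⟨a.1 (Fin.last M), a.2.1 _⟩

def pyramidSliceEquiv (k : ℕ+) :
    Fintype.piFinset (fun _ : Fin M => Icc 1 (k : ℕ)) ≃
      {a : PosTuples (IsInPyramid M) // lastPNat a = k} where
  toFun g := ⟨⟨Fin.snoc (α := fun _ => ℕ) g.1 k,
      forall_pos_and_isInPyramid_iff.2 (by simp [Fin.init_snoc, g.2])⟩,
    PNat.eq (by simp [lastPNat])⟩
  invFun a := ⟨Fin.init a.1.1, by
    obtain ⟨-, h⟩ := forall_pos_and_isInPyramid_iff.1 a.1.2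
    rwa [show a.1.1 (Fin.last M) = k from congrArg PNat.val a.2] at h⟩
  left_inv g := Subtype.ext (Fin.init_snoc (α := fun _ => ℕ) (k : ℕ) g.1)
  right_inv a := by
    refine Subtype.ext (Subtype.ext ?_)
    change Fin.snoc (α := fun _ => ℕ) (Fin.init a.1.1) (k : ℕ) = a.1.1
    rw [← show a.1.1 (Fin.last M) = k from congrArg PNat.val a.2]
    exact Fin.snoc_init_self _

def pyramidSigmaEquiv :
    (Σ k : ℕ+, Fintype.piFinset fun _ : Fin M => Icc 1 (k : ℕ)) ≃ PosTuples (IsInPyramid M) :=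
  (Equiv.sigmaCongrRight pyramidSliceEquiv).trans (Equiv.sigmaFiberEquiv lastPNat)

theorem HasSum.pyramid_slices {E : Type*} [AddCommMonoid E] [TopologicalSpace E]
    [ContinuousAdd E] [RegularSpace E] {f : (Fin (M + 1) → ℕ) → E} {s : E}
    (hf : HasSum (fun a : PosTuples (IsInPyramid M) => f a) s) :
    HasSum (fun k : ℕ+ => ∑ g ∈ Fintype.piFinset (fun _ : Fin M => Icc 1 (k : ℕ)),
      f (Fin.snoc (α := fun _ => ℕ) g k)) s :=
  (pyramidSigmaEquiv.hasSum_iff.2 hf).sigma fun k => by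
    rw [← sum_coe_sort]
    exact hasSum_fintype _

theorem latticeTerm_snoc (x b : Fin (M + 1) → ℂ) (g : Fin M → ℕ) (k : ℕ) :
    latticeTerm x b (Fin.snoc (α := fun _ => ℕ) g k) =
      (∏ i : Fin M, x i.castSucc ^ g i / (g i : ℂ) ^ b i.castSucc) *
        (x (Fin.last M) ^ k / (k : ℂ) ^ b (Fin.last M)) := by
  simp only [latticeTerm, Fin.prod_univ_castSucc, Fin.snoc_castSucc, Fin.snoc_last]

theorem tsum_latticeTerm_pyramid {x : Fin (M + 1) → ℂ} (hx : ∀ i, ‖x i‖ < 1) (b : Fin (M + 1) → ℂ) :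
    ∑' a : PosTuples (IsInPyramid M), latticeTerm x b a =
      ∑' k : ℕ+, (∏ i : Fin M, ∑ j ∈ Icc 1 (k : ℕ), x i.castSucc ^ j / (j : ℂ) ^ b i.castSucc) *
        x (Fin.last M) ^ (k : ℕ) / ((k : ℕ) : ℂ) ^ b (Fin.last M) := by
  have hsum : HasSum (fun a : PosTuples (IsInPyramid M) => latticeTerm x b a)
      (∑' a : PosTuples (IsInPyramid M), latticeTerm x b a) :=
    ((summable_latticeTerm hx b).comp_injective Subtype.val_injective).hasSum
  refine (hsum.pyramid_slices.tsum_eq.symm.trans (tsum_congr fun k => ?_))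
  rw [mul_div_assoc, prod_univ_sum, sum_mul]
  exact sum_congr rfl fun g _ => latticeTerm_snoc x b g k

end Pyramid

/-- The N-dimensional first-hyperquadrant hyperpyramid Visible Point Vector identity. -/
theorem stmt_11 (N : ℕ) (hN : 2 ≤ N) (x b : Fin N → ℂ)
    (hx : ∀ i, ‖x i‖ < 1) (hb : ∑ i, b i = 1) :
    (∏' a : {a : Fin N → ℕ // (∀ i, 0 < a i) ∧
        (∀ i : Fin N, (i : ℕ) < N - 1 → a i ≤ a ⟨N - 1, by omega⟩) ∧
        Finset.univ.gcd a = 1},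
      (1 / (1 - ∏ i, x i ^ a.val i)) ^ (1 / ∏ i, ((a.val i : ℂ) ^ b i))) =
    Complex.exp (∑' k : ℕ+,
      (∏ i ∈ Finset.univ.filter (fun i : Fin N => (i : ℕ) < N - 1),
        ∑ j ∈ Finset.Icc 1 (k : ℕ), x i ^ j / (j : ℂ) ^ b i) *
      x ⟨N - 1, by omega⟩ ^ (k : ℕ) / ((k : ℕ) : ℂ) ^ b ⟨N - 1, by omega⟩) := by
  obtain ⟨M, rfl⟩ : ∃ M, N = M + 1 := ⟨N - 1, by omega⟩
  have hfilter (f : Fin (M + 1) → ℂ) :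
      ∏ i ∈ univ.filter (fun i : Fin (M + 1) => (i : ℕ) < M), f i = ∏ i : Fin M, f i.castSucc := by
    simp [prod_filter, Fin.prod_univ_castSucc]
  calc _ = exp (∑' a : PosTuples (IsInPyramid M), latticeTerm x b a) :=
        tprod_visible_eq_exp_tsum isScaleInvariant_isInPyramid hx hb
    _ = _ := by
        rw [tsum_latticeTerm_pyramid hx]
        simp only [Nat.add_sub_cancel, hfilter]
        rfl
end
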